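/- Let D ⊆ ℝ^(F_{2^n}) be the dictionary consisting of all standard basis vectors e_x (x ∈ F_{2^n}) together with all vectors B_{a,b} for a ∈ F_{2^r}, b ∈ F_{2^n}. Then the mutual coherence of D equals 1/2^m, i.e. the maximum absolute inner product between two distinct vectors of D is exactly 1/2^m. -/
import Mathlib


set_option linter.unusedSectionVars false
noncomputable section

/-- The relative trace `Tr_k^l` from `F_{2^l}` to `F_{2^k}`, written as a function on an
ambient field of characteristic two: `x ↦ x + x^(2^k) + x^(2^(2k)) + ⋯ + x^(2^(l-k))`. -/
def relTr {F : Type*} [Field F] (k l : ℕ) (x : F) : F :=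
  ∑ i ∈ Finset.range (l / k), x ^ 2 ^ (k * i)

/-- `(-1)^y` for `y ∈ F_2 ⊆ F`, identifying `F_2` with `{0,1}`. -/
def sgn {F : Type*} [Field F] [DecidableEq F] (y : F) : ℝ :=
  if y = 0 then 1 else -1

/-- The vector `B_{a,b} ∈ ℝ^F`, whose `x`-th coordinate is
`(1/2^m)·(-1)^(Tr_1^m(a·x^(2^m+1)) + Tr_1^n(b·x))`. -/
def Bvec {F : Type*} [Field F] [DecidableEq F] (m n : ℕ) (a b : F) : F → ℝ :=
  fun x => (1 / 2 ^ m : ℝ) * sgn (relTr 1 m (a * x ^ (2 ^ m + 1)) + relTr 1 n (b * x))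

/-- The standard basis vector `e_x` of `ℝ^F`. -/
def evec {F : Type*} [DecidableEq F] (x : F) : F → ℝ :=
  fun y => if y = x then 1 else 0

section Aux

variable {F : Type*} [Field F] [DecidableEq F]

lemma relTr_zero (k l : ℕ) : relTr (F := F) k l 0 = 0 := by
  unfold relTr
  refine Finset.sum_eq_zero fun i _ => zero_pow (by positivity)

lemma relTr_add [CharP F 2] (k l : ℕ) (x y : F) :
    relTr k l (x + y) = relTr k l x + relTr k l y := by
  unfold relTr
  rw [← Finset.sum_add_distrib]
  exact Finset.sum_congr rfl fun i _ => add_pow_char_pow (p := 2) ..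

lemma relTr_sq [CharP F 2] (l : ℕ) {z : F} (hz : z ^ 2 ^ l = z) :
    relTr 1 l z * relTr 1 l z = relTr 1 l z := by
  have key : ∀ i : ℕ, (z ^ 2 ^ (1 * i)) ^ 2 = z ^ 2 ^ (1 * (i + 1)) := by
    intro i
    rw [← pow_mul, one_mul, one_mul, pow_succ]
  have h1 : relTr 1 l z * relTr 1 l z = ∑ i ∈ Finset.range l, z ^ 2 ^ (i + 1) := by
    unfold relTr
    rw [← sq, sum_pow_char]
    simp only [Nat.div_one]
    refine Finset.sum_congr rfl fun i _ => ?_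
    rw [one_mul, ← pow_mul, pow_succ]
  rw [h1]
  unfold relTr
  simp only [Nat.div_one, one_mul]
  have h2 := Finset.sum_range_succ' (fun i => z ^ 2 ^ i) l
  have h3 := Finset.sum_range_succ (fun i => z ^ 2 ^ i) l
  simp only [pow_zero, pow_one] at h2 h3
  have := h2.symm.trans h3
  rw [hz] at this
  exact add_right_cancel this

lemma relTr_mem [CharP F 2] (l : ℕ) {z : F} (hz : z ^ 2 ^ l = z) :
    relTr 1 l z = 0 ∨ relTr 1 l z = 1 := by
  have h := relTr_sq l hz
  have h2 : relTr 1 l z * (relTr 1 l z - 1) = 0 := by ring_nf; linear_combination h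
  rcases mul_eq_zero.1 h2 with h3 | h3
  · exact Or.inl h3
  · exact Or.inr (by linear_combination h3)

lemma sgn_zero : sgn (0 : F) = 1 := if_pos rfl

lemma abs_sgn (y : F) : |sgn y| = 1 := by
  unfold sgn; split <;> simp

lemma sgn_add [CharP F 2] {u v : F} (hu : u = 0 ∨ u = 1) (hv : v = 0 ∨ v = 1) :
    sgn (u + v) = sgn u * sgn v := by
  have h2 : (1 : F) + 1 = 0 := CharTwo.add_self_eq_zero 1
  rcases hu with rfl | rfl <;> rcases hv with rfl | rfl <;>
    simp [sgn, h2, one_ne_zero]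

lemma mem_F2_add [CharP F 2] {u v : F} (hu : u = 0 ∨ u = 1) (hv : v = 0 ∨ v = 1) :
    u + v = 0 ∨ u + v = 1 := by
  have h2 : (1 : F) + 1 = 0 := CharTwo.add_self_eq_zero 1
  rcases hu with rfl | rfl <;> rcases hv with rfl | rfl <;> simp [h2]

lemma relTr_split (m : ℕ) (z : F) :
    relTr 1 (2 * m) z = relTr 1 m z + relTr 1 m (z ^ 2 ^ m) := by
  unfold relTr
  simp only [Nat.div_one, one_mul, two_mul]
  rw [Finset.sum_range_add]
  congr 1
  refine Finset.sum_congr rfl fun i _ => ?_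
  rw [← pow_mul, ← pow_add]

/-- The trace polynomial is not identically zero. -/
lemma exists_relTr_ne_zero [Fintype F] (n : ℕ) (hn : 0 < n)
    (hcard : Fintype.card F = 2 ^ n) : ∃ x : F, relTr 1 n x ≠ 0 := by
  by_contra h
  push_neg at h
  set p : Polynomial F := ∑ i ∈ Finset.range n, Polynomial.X ^ (2 ^ i) with hp
  have hev : ∀ x : F, p.eval x = 0 := by
    intro x
    rw [hp, Polynomial.eval_finset_sum]
    simpa [relTr] using h x
  have hdeg : p.natDegree ≤ 2 ^ (n - 1) := by
    refine Polynomial.natDegree_sum_le_of_forall_le _ _ fun i hi => ?_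
    calc (Polynomial.X ^ 2 ^ i : Polynomial F).natDegree ≤ 2 ^ i :=
          le_of_eq (Polynomial.natDegree_X_pow _)
      _ ≤ 2 ^ (n - 1) := Nat.pow_le_pow_right (by norm_num)
          (Nat.le_sub_one_of_lt (Finset.mem_range.1 hi))
  have hne : p ≠ 0 := by
    intro h0
    have hc : p.coeff (2 ^ (n - 1)) = 1 := by
      rw [hp, Polynomial.finset_sum_coeff]
      have : ∀ i ∈ Finset.range n,
          (Polynomial.X ^ 2 ^ i : Polynomial F).coeff (2 ^ (n - 1)) =
            if i = n - 1 then 1 else 0 := by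
        intro i _
        rw [Polynomial.coeff_X_pow]
        congr 1
        simp only [eq_iff_iff]
        constructor
        · intro hh; exact (Nat.pow_right_injective (le_refl 2) hh.symm)
        · intro hh; rw [hh]
      rw [Finset.sum_congr rfl this, Finset.sum_ite_eq' _ (n - 1)]
      simp [Finset.mem_range, Nat.sub_lt hn one_pos]
    rw [h0] at hc
    simp at hc
  refine hne (Polynomial.eq_zero_of_natDegree_lt_card_of_eval_eq_zero p
    Function.injective_id hev ?_)
  rw [hcard]
  exact lt_of_le_of_lt hdeg (Nat.pow_lt_pow_right (by norm_num) (Nat.sub_lt hn one_pos))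

lemma sum_sgn_relTr_eq_zero [Fintype F] [CharP F 2] (n : ℕ) (hn : 0 < n)
    (hcard : Fintype.card F = 2 ^ n) {c : F} (hc : c ≠ 0) :
    ∑ x : F, sgn (relTr 1 n (c * x)) = 0 := by
  have hpow : ∀ z : F, z ^ 2 ^ n = z := fun z => by
    rw [← hcard]; exact FiniteField.pow_card z
  obtain ⟨y, hy⟩ := exists_relTr_ne_zero n hn hcard
  set x₀ : F := c⁻¹ * y with hx₀def
  have hcx₀ : c * x₀ = y := by rw [hx₀def, ← mul_assoc, mul_inv_cancel₀ hc, one_mul]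
  have hx₀ : relTr 1 n (c * x₀) = 1 := by
    rw [hcx₀]
    rcases relTr_mem n (hpow y) with h | h
    · exact absurd h hy
    · exact h
  set S := ∑ x : F, sgn (relTr 1 n (c * x)) with hS
  have key : S = -S := by
    calc S = ∑ x : F, sgn (relTr 1 n (c * (x + x₀))) := by
            rw [hS]
            exact (Equiv.sum_comp (Equiv.addRight x₀)
              (fun x => sgn (relTr 1 n (c * x)))).symm
      _ = ∑ x : F, sgn (relTr 1 n (c * x) + relTr 1 n (c * x₀)) := by
            refine Finset.sum_congr rfl fun x _ => ?_
            rw [mul_add, relTr_add]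
      _ = ∑ x : F, sgn (relTr 1 n (c * x)) * sgn (relTr 1 n (c * x₀)) := by
            refine Finset.sum_congr rfl fun x _ => ?_
            exact sgn_add (relTr_mem n (hpow _)) (relTr_mem n (hpow _))
      _ = -S := by
            rw [hx₀, ← Finset.sum_mul]
            simp [sgn, one_ne_zero, hS]
  linarith

variable [CharP F 2] [Fintype F]


lemma key_abs (m n : ℕ) (hm0 : 0 < m) (hn : n = 2 * m)
    (hF : Fintype.card F = 2 ^ n) {c : F} (hc : c ≠ 0) (hcq : c ^ 2 ^ m = c) (d : F) :
    |∑ x : F, sgn (relTr 1 m (c * x ^ (2 ^ m + 1)) + relTr 1 n (d * x))| = 2 ^ m := by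
  have hn0 : 0 < n := by omega
  have h2 : (2 : F) = 0 := by
    have := CharP.cast_eq_zero F 2; exact_mod_cast this
  have hpow : ∀ z : F, z ^ 2 ^ n = z := fun z => by
    rw [← hF]; exact FiniteField.pow_card z
  have hqq : 2 ^ m * 2 ^ m = 2 ^ n := by rw [hn, two_mul, pow_add]
  have hpowq : ∀ z : F, (z ^ 2 ^ m) ^ 2 ^ m = z := fun z => by
    rw [← pow_mul, hqq]; exact hpow z
  have hfrob : ∀ x y : F, (x + y) ^ 2 ^ m = x ^ 2 ^ m + y ^ 2 ^ m := fun x y =>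
    add_pow_char_pow (p := 2) ..
  have hfrobBij : Function.Bijective (fun x : F => x ^ 2 ^ m) := by
    refine Finite.injective_iff_bijective.mp fun x y hxy => ?_
    have hz : (x + y) ^ 2 ^ m = 0 := by
      rw [hfrob, hxy]; exact CharTwo.add_self_eq_zero _
    have hxy0 : x + y = 0 := pow_eq_zero_iff (n := 2 ^ m) (by positivity) |>.mp hz
    linear_combination hxy0 - y * h2
  -- the exponent function
  set g : F → F := fun x => relTr 1 m (c * x ^ (2 ^ m + 1)) + relTr 1 n (d * x) with hg
  have hcx : ∀ x : F, (c * x ^ (2 ^ m + 1)) ^ 2 ^ m = c * x ^ (2 ^ m + 1) := by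
    intro x
    rw [mul_pow, hcq, ← pow_mul]
    congr 1
    have he : (2 ^ m + 1) * 2 ^ m = 2 ^ m * 2 ^ m + 2 ^ m := by ring
    rw [he, pow_add, pow_mul, hpowq, pow_succ, mul_comm]
  have hgmem : ∀ x : F, g x = 0 ∨ g x = 1 := fun x =>
    mem_F2_add (relTr_mem m (hcx x)) (relTr_mem n (hpow _))
  have claim : ∀ u x : F, g x + g (x + u) =
      relTr 1 n ((c * u) * x ^ 2 ^ m) + g u := by
    intro u x
    have e2 : relTr 1 n (d * x) + relTr 1 n (d * (x + u)) = relTr 1 n (d * u) := by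
      rw [← relTr_add]
      congr 1
      linear_combination (d * x) * h2
    have e3 : relTr 1 m (c * x ^ (2 ^ m + 1)) + relTr 1 m (c * (x + u) ^ (2 ^ m + 1)) =
        relTr 1 n ((c * u) * x ^ 2 ^ m) + relTr 1 m (c * u ^ (2 ^ m + 1)) := by
      have e1 : c * x ^ (2 ^ m + 1) + c * (x + u) ^ (2 ^ m + 1) =
          ((c * u) * x ^ 2 ^ m + ((c * u) * x ^ 2 ^ m) ^ 2 ^ m) + c * u ^ (2 ^ m + 1) := by
        have hw : ((c * u) * x ^ 2 ^ m) ^ 2 ^ m = (c * u ^ 2 ^ m) * x := by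
          rw [mul_pow, mul_pow, hcq, hpowq]
        rw [hw, pow_succ (x + u), hfrob, pow_succ x, pow_succ u]
        ring_nf
        linear_combination (c * x ^ 2 ^ m * x) * h2
      rw [← relTr_add, e1, relTr_add, relTr_add, hn, relTr_split]
    show (relTr 1 m (c * x ^ (2 ^ m + 1)) + relTr 1 n (d * x)) +
        (relTr 1 m (c * (x + u) ^ (2 ^ m + 1)) + relTr 1 n (d * (x + u))) =
        relTr 1 n ((c * u) * x ^ 2 ^ m) +
          (relTr 1 m (c * u ^ (2 ^ m + 1)) + relTr 1 n (d * u))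
    linear_combination e2 + e3
  -- squared sum
  set S : ℝ := ∑ x : F, sgn (g x) with hS
  have hSS : S * S = (2 : ℝ) ^ n := by
    calc S * S = ∑ x : F, ∑ y : F, sgn (g x) * sgn (g y) := by
          rw [hS, Finset.sum_mul_sum]
      _ = ∑ x : F, ∑ u : F, sgn (g x) * sgn (g (x + u)) := by
          refine Finset.sum_congr rfl fun x _ => ?_
          exact (Equiv.sum_comp (Equiv.addLeft x)
            (fun y => sgn (g x) * sgn (g y))).symm
      _ = ∑ x : F, ∑ u : F, sgn (g x + g (x + u)) := by
          refine Finset.sum_congr rfl fun x _ => Finset.sum_congr rfl fun u _ => ?_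
          exact (sgn_add (hgmem x) (hgmem (x + u))).symm
      _ = ∑ u : F, ∑ x : F, sgn (g x + g (x + u)) := Finset.sum_comm
      _ = (2 : ℝ) ^ n := by
          rw [Finset.sum_eq_single 0]
          · have hz : ∀ x : F, g x + g (x + 0) = 0 := fun x => by
              rw [add_zero]; exact CharTwo.add_self_eq_zero _
            calc ∑ x : F, sgn (g x + g (x + 0)) = ∑ _x : F, (1 : ℝ) := by
                  refine Finset.sum_congr rfl fun x _ => ?_
                  rw [hz x, sgn_zero]
              _ = (2 : ℝ) ^ n := by
                  rw [Finset.sum_const, Finset.card_univ, hF]; push_cast [nsmul_eq_mul]; ring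
          · intro u _ hu
            have hcu : c * u ≠ 0 := mul_ne_zero hc hu
            calc ∑ x : F, sgn (g x + g (x + u))
                = ∑ x : F, sgn (relTr 1 n ((c * u) * x ^ 2 ^ m)) * sgn (g u) := by
                  refine Finset.sum_congr rfl fun x _ => ?_
                  rw [claim u x]
                  exact sgn_add (relTr_mem n (hpow _)) (hgmem u)
              _ = (∑ x : F, sgn (relTr 1 n ((c * u) * x ^ 2 ^ m))) * sgn (g u) :=
                  (Finset.sum_mul _ _ _).symm
              _ = 0 := by
                  have hre : (∑ x : F, sgn (relTr 1 n ((c * u) * x ^ 2 ^ m)))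
                      = ∑ y : F, sgn (relTr 1 n ((c * u) * y)) :=
                    Equiv.sum_comp (Equiv.ofBijective _ hfrobBij)
                      (fun y => sgn (relTr 1 n ((c * u) * y)))
                  rw [hre, sum_sgn_relTr_eq_zero n hn0 hF hcu, zero_mul]
          · intro h; exact absurd (Finset.mem_univ 0) h
  have habs : |S| = (2 : ℝ) ^ m := by
    have h1 : |S| * |S| = ((2 : ℝ) ^ m) * ((2 : ℝ) ^ m) := by
      rw [abs_mul_abs_self, hSS, ← pow_add, ← two_mul, ← hn]
    nlinarith [abs_nonneg S, pow_pos (by norm_num : (0:ℝ) < 2) m]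
  exact habs
end Aux


lemma key_zero {F : Type*} [Field F] [DecidableEq F] [CharP F 2] [Fintype F]
    (m n : ℕ) (hn0 : 0 < n) (hF : Fintype.card F = 2 ^ n) {d : F} (hd : d ≠ 0) :
    ∑ x : F, sgn (relTr 1 m ((0 : F) * x ^ (2 ^ m + 1)) + relTr 1 n (d * x)) = 0 := by
  calc ∑ x : F, sgn (relTr 1 m ((0 : F) * x ^ (2 ^ m + 1)) + relTr 1 n (d * x))
      = ∑ x : F, sgn (relTr 1 n (d * x)) := by
        refine Finset.sum_congr rfl fun x _ => ?_
        rw [zero_mul, relTr_zero, zero_add]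
    _ = 0 := sum_sgn_relTr_eq_zero n hn0 hF hd

theorem stmt13 (t r : ℕ) (ht : 0 < t) (hr : 0 < r) (m n : ℕ) (hm : m = t * r)
    (hn : n = 2 * m) (F : Type*) [Field F] [Fintype F] [DecidableEq F]
    (hF : Fintype.card F = 2 ^ n) :
    -- the dictionary `D`, indexed by `F ⊕ (F_{2^r} × F)`:
    -- standard basis vectors `e_x` together with the vectors `B_{a,b}`
    let D : F ⊕ ({a : F // a ^ 2 ^ r = a} × F) → F → ℝ :=
      Sum.elim (fun x => evec x) (fun p => Bvec m n p.1.1 p.2)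
    (∀ i j, i ≠ j → |∑ x : F, D i x * D j x| ≤ 1 / 2 ^ m) ∧
    (∃ i j, i ≠ j ∧ |∑ x : F, D i x * D j x| = 1 / 2 ^ m) := by
  intro D
  have hm0 : 0 < m := hm ▸ Nat.mul_pos ht hr
  have hn0 : 0 < n := by omega
  have h2F : (2 : F) = 0 := by
    have h := FiniteField.cast_card_eq_zero F
    rw [hF] at h
    push_cast at h
    exact pow_eq_zero_iff (by omega) |>.mp h
  haveI hchar : CharP F 2 := by
    haveI := ringChar.charP F
    have hp : (ringChar F).Prime := CharP.char_is_prime F (ringChar F)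
    have hdvd : ringChar F ∣ 2 := ringChar.dvd (by exact_mod_cast h2F)
    exact ringChar.of_eq ((Nat.prime_dvd_prime_iff_eq hp Nat.prime_two).mp hdvd)
  have hpow : ∀ z : F, z ^ 2 ^ n = z := fun z => by
    rw [← hF]; exact FiniteField.pow_card z
  have hqq : 2 ^ m * 2 ^ m = 2 ^ n := by rw [hn, two_mul, pow_add]
  have hfrob : ∀ x y : F, (x + y) ^ 2 ^ m = x ^ 2 ^ m + y ^ 2 ^ m := fun x y =>
    add_pow_char_pow (p := 2) ..
  have hpowq : ∀ z : F, (z ^ 2 ^ m) ^ 2 ^ m = z := fun z => by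
    rw [← pow_mul, hqq]; exact hpow z
  have hsub : ∀ a : F, a ^ 2 ^ r = a → a ^ 2 ^ m = a := by
    intro a ha
    have key : ∀ s : ℕ, a ^ 2 ^ (r * s) = a := by
      intro s
      induction s with
      | zero => simp
      | succ s ih =>
        have he : r * (s + 1) = r * s + r := by ring
        rw [he, pow_add, pow_mul, ih]
        exact ha
    have := key t
    rwa [hm, mul_comm t r]
  have hcx : ∀ a x : F, a ^ 2 ^ m = a →
      (a * x ^ (2 ^ m + 1)) ^ 2 ^ m = a * x ^ (2 ^ m + 1) := by
    intro a x ha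
    rw [mul_pow, ha, ← pow_mul]
    congr 1
    have he : (2 ^ m + 1) * 2 ^ m = 2 ^ m * 2 ^ m + 2 ^ m := by ring
    rw [he, pow_add, pow_mul, hpowq, pow_succ, mul_comm]
  have hBmem : ∀ a b x : F, a ^ 2 ^ m = a →
      (relTr 1 m (a * x ^ (2 ^ m + 1)) + relTr 1 n (b * x) = 0 ∨
        relTr 1 m (a * x ^ (2 ^ m + 1)) + relTr 1 n (b * x) = 1) := fun a b x ha =>
    mem_F2_add (relTr_mem m (hcx a x ha)) (relTr_mem n (hpow _))
  have habsB : ∀ a b x : F, |Bvec m n a b x| = 1 / 2 ^ m := by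
    intro a b x
    unfold Bvec
    rw [abs_mul, abs_sgn, mul_one, abs_of_pos (by positivity)]
  have heB : ∀ x0 a b : F, (∑ x : F, evec x0 x * Bvec m n a b x) = Bvec m n a b x0 := by
    intro x0 a b
    unfold evec
    calc ∑ x : F, (if x = x0 then (1 : ℝ) else 0) * Bvec m n a b x
        = ∑ x : F, (if x = x0 then Bvec m n a b x else 0) := by
          refine Finset.sum_congr rfl fun x _ => ?_
          split <;> simp
      _ = Bvec m n a b x0 := by
          rw [Finset.sum_ite_eq' Finset.univ x0]
          simp
  have hBB : ∀ a b a' b' : F, a ^ 2 ^ m = a → a' ^ 2 ^ m = a' →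
      (∑ x : F, Bvec m n a b x * Bvec m n a' b' x)
        = (1 / (2 : ℝ) ^ n) *
            ∑ x : F, sgn (relTr 1 m ((a + a') * x ^ (2 ^ m + 1)) + relTr 1 n ((b + b') * x)) := by
    intro a b a' b' ha ha'
    rw [Finset.mul_sum]
    refine Finset.sum_congr rfl fun x _ => ?_
    unfold Bvec
    have hs : sgn (relTr 1 m (a * x ^ (2 ^ m + 1)) + relTr 1 n (b * x)) *
        sgn (relTr 1 m (a' * x ^ (2 ^ m + 1)) + relTr 1 n (b' * x)) =
        sgn (relTr 1 m ((a + a') * x ^ (2 ^ m + 1)) + relTr 1 n ((b + b') * x)) := by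
      rw [← sgn_add (hBmem a b x ha) (hBmem a' b' x ha')]
      congr 1
      have t1 : relTr 1 m (a * x ^ (2 ^ m + 1)) + relTr 1 m (a' * x ^ (2 ^ m + 1)) =
          relTr 1 m ((a + a') * x ^ (2 ^ m + 1)) := by rw [← relTr_add, add_mul]
      have t2 : relTr 1 n (b * x) + relTr 1 n (b' * x) = relTr 1 n ((b + b') * x) := by
        rw [← relTr_add, add_mul]
      linear_combination t1 + t2
    rw [mul_mul_mul_comm, hs]
    congr 1
    rw [div_mul_div_comm, one_mul, ← pow_add, hn, two_mul]
  have hpos : (0 : ℝ) < 1 / 2 ^ m := by positivity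
  constructor
  · rintro (x | p) (y | p') hij
    · -- e, e
      have hxy : x ≠ y := fun h => hij (by rw [h])
      have : ∑ z : F, D (Sum.inl x) z * D (Sum.inl y) z = 0 := by
        refine Finset.sum_eq_zero fun z _ => ?_
        simp only [D, Sum.elim_inl]
        unfold evec
        rcases eq_or_ne z x with rfl | hz
        · rw [if_neg hxy, mul_zero]
        · rw [if_neg hz, zero_mul]
      rw [this, abs_zero]
      exact le_of_lt hpos
    · -- e, B
      have : ∑ z : F, D (Sum.inl x) z * D (Sum.inr p') z = Bvec m n p'.1.1 p'.2 x := by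
        simp only [D, Sum.elim_inl, Sum.elim_inr]
        exact heB x _ _
      rw [this, habsB]
    · -- B, e
      have : ∑ z : F, D (Sum.inr p) z * D (Sum.inl y) z = Bvec m n p.1.1 p.2 y := by
        simp only [D, Sum.elim_inl, Sum.elim_inr]
        rw [Finset.sum_congr rfl fun z _ => mul_comm _ _]
        exact heB y _ _
      rw [this, habsB]
    · -- B, B
      have hpp' : p ≠ p' := fun h => hij (by rw [h])
      have ha : (p.1 : F) ^ 2 ^ m = (p.1 : F) := hsub _ p.1.2
      have ha' : (p'.1 : F) ^ 2 ^ m = (p'.1 : F) := hsub _ p'.1.2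
      have hsum : ∑ z : F, D (Sum.inr p) z * D (Sum.inr p') z
          = (1 / (2 : ℝ) ^ n) * ∑ x : F,
              sgn (relTr 1 m (((p.1 : F) + (p'.1 : F)) * x ^ (2 ^ m + 1)) +
                relTr 1 n ((p.2 + p'.2) * x)) := by
        simp only [D, Sum.elim_inr]
        exact hBB _ _ _ _ ha ha'
      by_cases hac : (p.1 : F) = (p'.1 : F)
      · have hbb' : p.2 ≠ p'.2 := by
          intro h
          exact hpp' (Prod.ext (Subtype.ext hac) h)
        have hd : (p.2 + p'.2 : F) ≠ 0 := fun h =>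
          hbb' (by linear_combination h - p'.2 * h2F)
        have hzero : (p.1 : F) + (p'.1 : F) = 0 := by
          rw [hac]; exact CharTwo.add_self_eq_zero _
        rw [hsum, hzero, key_zero m n hn0 hF hd, mul_zero, abs_zero]
        exact le_of_lt hpos
      · have hc : (p.1 : F) + (p'.1 : F) ≠ 0 := fun h =>
          hac (by linear_combination h - (p'.1 : F) * h2F)
        have hcq : ((p.1 : F) + (p'.1 : F)) ^ 2 ^ m = (p.1 : F) + (p'.1 : F) := by
          rw [hfrob, ha, ha']
        rw [hsum, abs_mul, key_abs m n hm0 hn hF hc hcq,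
          abs_of_pos (by positivity : (0:ℝ) < 1 / (2:ℝ) ^ n)]
        have : (1 / (2 : ℝ) ^ n) * 2 ^ m = 1 / 2 ^ m := by
          rw [hn, two_mul, pow_add]
          field_simp
        rw [this]
  · refine ⟨Sum.inl 0, Sum.inr (⟨0, by rw [zero_pow (by positivity)]⟩, 0), by simp, ?_⟩
    simp only [D, Sum.elim_inl, Sum.elim_inr]
    rw [heB 0 0 0, habsB]
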